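/- Let R = k[X,Y] with standard grading over an algebraically closed field of characteristic p > 0, and let a₁,a₂,a₃ ∈ ℕ. Then sg(X^{p·a₁}, Y^{p·a₂}, (X+Y)^{p·a₃}) = p · sg(X^{a₁}, Y^{a₂}, (X+Y)^{a₃}). -/
import Mathlib


open MvPolynomial

noncomputable section

/-- The set of total degrees of nontrivial homogeneous syzygies of `F₁, F₂, F₃`,
where `F i` is weighted-homogeneous of degree `d i` for the weights `w`. -/
def syzDegSet {k : Type*} [Field k] (w : Fin 2 → ℤ) (d : Fin 3 → ℤ)
    (F : Fin 3 → MvPolynomial (Fin 2) k) : Set ℤ :=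
  {m | ∃ s : Fin 3 → MvPolynomial (Fin 2) k,
      s ≠ 0 ∧ ∑ i, s i * F i = 0 ∧ ∀ i, IsWeightedHomogeneous w (s i) (m - d i)}

/-- The syzygy gap `sg(F₁,F₂,F₃) = d₁ + d₂ + d₃ - 2·m(F₁,F₂,F₃)`, where
`m(F₁,F₂,F₃)` is the minimal total degree of a nontrivial syzygy. -/
noncomputable def sg {k : Type*} [Field k] (w : Fin 2 → ℤ) (d : Fin 3 → ℤ)
    (F : Fin 3 → MvPolynomial (Fin 2) k) : ℤ :=
  d 0 + d 1 + d 2 - 2 * sInf (syzDegSet w d F)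

namespace SyzAux

lemma add_single_apply (m : Fin 2 →₀ ℕ) (j i : Fin 2) :
    (m + Finsupp.single j 1 : Fin 2 →₀ ℕ) i = m i + (if j = i then 1 else 0) := by
  simp [Finsupp.add_apply, Finsupp.single_apply]

lemma sub_single_apply (d : Fin 2 →₀ ℕ) (j i : Fin 2) :
    (d - Finsupp.single j 1 : Fin 2 →₀ ℕ) i = d i - (if j = i then 1 else 0) := by
  simp [Finsupp.tsub_apply, Finsupp.single_apply]

variable {k : Type*} [Field k]

lemma weight_one_apply (d : Fin 2 →₀ ℕ) :
    Finsupp.weight (fun _ : Fin 2 => (1 : ℤ)) d = (d 0 : ℤ) + (d 1 : ℤ) := by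
  rw [Finsupp.weight_apply, Finsupp.sum_fintype]
  · simp [Fin.sum_univ_two]
  · intro i; simp

lemma nonneg_of_homog {f : MvPolynomial (Fin 2) k} {n : ℤ}
    (hf : IsWeightedHomogeneous (fun _ => (1 : ℤ)) f n) (h0 : f ≠ 0) : 0 ≤ n := by
  obtain ⟨d, hd⟩ := exists_coeff_ne_zero h0
  have h := hf hd
  rw [weight_one_apply] at h
  omega

lemma homog_pow {f : MvPolynomial (Fin 2) k} {n : ℤ} {w : Fin 2 → ℤ}
    (hf : IsWeightedHomogeneous w f n) (e : ℕ) :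
    IsWeightedHomogeneous w (f ^ e) ((e : ℤ) * n) := by
  induction e with
  | zero => simpa using isWeightedHomogeneous_one k w
  | succ e ih =>
    have h : ((e + 1 : ℕ) : ℤ) * n = (e : ℤ) * n + n := by push_cast; ring
    rw [pow_succ, h]
    exact ih.mul hf

lemma homog_neg {f : MvPolynomial (Fin 2) k} {n : ℤ} {w : Fin 2 → ℤ}
    (hf : IsWeightedHomogeneous w f n) : IsWeightedHomogeneous w (-f) n := by
  intro d hd
  apply hf
  simpa using hd

lemma coeff_pderiv (j : Fin 2) (f : MvPolynomial (Fin 2) k) (m : Fin 2 →₀ ℕ) :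
    coeff m (pderiv j f) = coeff (m + Finsupp.single j 1) f * ((m j : k) + 1) := by
  conv_lhs => rw [f.as_sum]
  conv_rhs => rw [f.as_sum]
  rw [map_sum, coeff_sum, coeff_sum, Finset.sum_mul]
  refine Finset.sum_congr rfl fun d _ => ?_
  rw [pderiv_monomial, coeff_monomial, coeff_monomial]
  by_cases h : d = m + Finsupp.single j 1
  · subst h
    have h1 : m + Finsupp.single j 1 - Finsupp.single j 1 = m := by simp
    have h2 : (m + Finsupp.single j 1 : Fin 2 →₀ ℕ) j = m j + 1 := by
      rw [add_single_apply, if_pos rfl]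
    rw [if_pos h1, if_pos rfl, h2]
    push_cast
    ring
  · rw [if_neg h, zero_mul]
    by_cases h' : d - Finsupp.single j 1 = m
    · have hdj : d j = 0 := by
        by_contra hdj
        exact h (by
          rw [← h', tsub_add_cancel_of_le (Finsupp.single_le_iff.mpr
            (Nat.one_le_iff_ne_zero.mpr hdj))])
      rw [if_pos h', hdj]
      simp
    · rw [if_neg h']

lemma homog_pderiv {f : MvPolynomial (Fin 2) k} {n : ℤ} (j : Fin 2)
    (hf : IsWeightedHomogeneous (fun _ => (1 : ℤ)) f n) :
    IsWeightedHomogeneous (fun _ => (1 : ℤ)) (pderiv j f) (n - 1) := by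
  intro m hm
  rw [coeff_pderiv] at hm
  have h1 : coeff (m + Finsupp.single j 1) f ≠ 0 := left_ne_zero_of_mul hm
  have h := hf h1
  rw [weight_one_apply] at h ⊢
  rw [add_single_apply, add_single_apply] at h
  fin_cases j <;> simp at h <;> push_cast at h ⊢ <;> omega

lemma dvd_of_pderiv_eq_zero (p : ℕ) [CharP k p] {f : MvPolynomial (Fin 2) k} (j : Fin 2)
    (h : pderiv j f = 0) {d : Fin 2 →₀ ℕ} (hd : coeff d f ≠ 0) : p ∣ d j := by
  rcases Nat.eq_zero_or_pos (d j) with h0 | h0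
  · simp [h0]
  · have hle : Finsupp.single j 1 ≤ d := Finsupp.single_le_iff.mpr h0
    have key := coeff_pderiv j f (d - Finsupp.single j 1)
    rw [h, coeff_zero, tsub_add_cancel_of_le hle] at key
    have hmj : (d - Finsupp.single j 1 : Fin 2 →₀ ℕ) j = d j - 1 := by
      rw [sub_single_apply, if_pos rfl]
    have hcast : (((d - Finsupp.single j 1 : Fin 2 →₀ ℕ) j : ℕ) : k) + 1 = ((d j : ℕ) : k) := by
      rw [hmj, ← Nat.cast_one (R := k), ← Nat.cast_add, Nat.sub_add_cancel h0]
    rw [hcast] at key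
    have hz : ((d j : ℕ) : k) = 0 := by
      rcases mul_eq_zero.mp key.symm with h' | h'
      · exact absurd h' hd
      · exact h'
    exact (CharP.cast_eq_zero_iff k p _).mp hz

variable [IsAlgClosed k]

/-- a `p`-th root in an algebraically closed field -/
def kroot (p : ℕ) (hp : 0 < p) (c : k) : k :=
  (IsAlgClosed.exists_pow_nat_eq c hp).choose

lemma kroot_pow (p : ℕ) (hp : 0 < p) (c : k) : kroot p hp c ^ p = c :=
  (IsAlgClosed.exists_pow_nat_eq c hp).choose_spec

/-- a `p`-th root of a polynomial all of whose exponents are divisible by `p` -/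
def root (p : ℕ) (hp : 0 < p) (f : MvPolynomial (Fin 2) k) : MvPolynomial (Fin 2) k :=
  ∑ d ∈ f.support,
    monomial (d.mapRange (· / p) (Nat.zero_div _)) (kroot p hp (coeff d f))

lemma root_pow (p : ℕ) (hp : p.Prime) [CharP k p] {f : MvPolynomial (Fin 2) k}
    (hdvd : ∀ d : Fin 2 →₀ ℕ, coeff d f ≠ 0 → ∀ j, p ∣ d j) :
    root p hp.pos f ^ p = f := by
  haveI := Fact.mk hp
  rw [root, sum_pow_char]
  refine (Finset.sum_congr rfl fun d hd => ?_).trans f.support_sum_monomial_coeff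
  rw [monomial_pow, kroot_pow]
  have hsm : p • (d.mapRange (· / p) (Nat.zero_div _)) = d := by
    ext j
    rw [Finsupp.smul_apply, Finsupp.mapRange_apply, smul_eq_mul]
    exact Nat.mul_div_cancel' (hdvd d (mem_support_iff.mp hd) j)
  rw [hsm]

lemma root_homog (p : ℕ) (hp : p.Prime) {f : MvPolynomial (Fin 2) k} {n : ℤ}
    (hdvd : ∀ d : Fin 2 →₀ ℕ, coeff d f ≠ 0 → ∀ j, p ∣ d j)
    (hf : IsWeightedHomogeneous (fun _ => (1 : ℤ)) f ((p : ℤ) * n)) :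
    IsWeightedHomogeneous (fun _ => (1 : ℤ)) (root p hp.pos f) n := by
  apply IsWeightedHomogeneous.sum
  intro d hd
  apply isWeightedHomogeneous_monomial
  have hdc : coeff d f ≠ 0 := mem_support_iff.mp hd
  have hw := hf hdc
  rw [weight_one_apply] at hw
  rw [weight_one_apply]
  obtain ⟨c0, hc0⟩ := hdvd d hdc 0
  obtain ⟨c1, hc1⟩ := hdvd d hdc 1
  have m0 : (d.mapRange (· / p) (Nat.zero_div _)) 0 = c0 := by
    rw [Finsupp.mapRange_apply, hc0, Nat.mul_div_cancel_left _ hp.pos]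
  have m1 : (d.mapRange (· / p) (Nat.zero_div _)) 1 = c1 := by
    rw [Finsupp.mapRange_apply, hc1, Nat.mul_div_cancel_left _ hp.pos]
  rw [m0, m1]
  rw [hc0, hc1] at hw
  push_cast at hw
  have hp0 : (p : ℤ) ≠ 0 := by exact_mod_cast hp.ne_zero
  have h2 : (p : ℤ) * ((c0 : ℤ) + (c1 : ℤ)) = (p : ℤ) * n := by linarith
  exact mul_left_cancel₀ hp0 h2

lemma frob_sInf (p : ℕ) (hp : p.Prime) [CharP k p]
    (d : Fin 3 → ℤ) (F : Fin 3 → MvPolynomial (Fin 2) k)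
    (hF : ∀ i, F i ≠ 0)
    (hFh : ∀ i, IsWeightedHomogeneous (fun _ => (1 : ℤ)) (F i) (d i)) :
    sInf (syzDegSet (fun _ => (1 : ℤ)) (fun i => (p : ℤ) * d i) (fun i => F i ^ p))
      = (p : ℤ) * sInf (syzDegSet (fun _ => (1 : ℤ)) d F) := by
  haveI := Fact.mk hp
  set T := syzDegSet (fun _ => (1 : ℤ)) d F with hTdef
  set S := syzDegSet (fun _ => (1 : ℤ)) (fun i => (p : ℤ) * d i) (fun i => F i ^ p) with hSdef
  have hd0 : ∀ i, 0 ≤ d i := fun i => nonneg_of_homog (hFh i) (hF i)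
  -- the Koszul syzygy shows T is nonempty
  have hT1 : (d 0 + d 1) ∈ T := by
    refine ⟨![F 1, -(F 0), 0], ?_, ?_, ?_⟩
    · rw [Function.ne_iff]
      refine ⟨0, ?_⟩
      show F 1 ≠ 0
      exact hF 1
    · rw [Fin.sum_univ_three]
      simp only [Matrix.cons_val_zero, Matrix.cons_val_one, Matrix.head_cons,
        Matrix.cons_val_two, Matrix.tail_cons]
      ring
    · intro i
      fin_cases i
      · show IsWeightedHomogeneous (fun _ => (1 : ℤ)) (F 1) (d 0 + d 1 - d 0)
        have h : d 0 + d 1 - d 0 = d 1 := by ring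
        rw [h]; exact hFh 1
      · show IsWeightedHomogeneous (fun _ => (1 : ℤ)) (-(F 0)) (d 0 + d 1 - d 1)
        have h : d 0 + d 1 - d 1 = d 0 := by ring
        rw [h]; exact homog_neg (hFh 0)
      · show IsWeightedHomogeneous (fun _ => (1 : ℤ)) (0 : MvPolynomial (Fin 2) k) _
        exact isWeightedHomogeneous_zero k _ _
  have hTbdd : BddBelow T := by
    refine ⟨0, fun m hm => ?_⟩
    obtain ⟨s, hs0, hsum, hsh⟩ := hm
    obtain ⟨i, hi⟩ := Function.ne_iff.mp hs0
    have hi' : s i ≠ 0 := by simpa using hi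
    have h1 : (0 : ℤ) ≤ m - d i := nonneg_of_homog (hsh i) hi'
    have h2 := hd0 i
    linarith
  have hTS : ∀ m ∈ T, (p : ℤ) * m ∈ S := by
    intro m hm
    obtain ⟨s, hs0, hsum, hsh⟩ := hm
    refine ⟨fun i => s i ^ p, ?_, ?_, ?_⟩
    · obtain ⟨i, hi⟩ := Function.ne_iff.mp hs0
      have hi' : s i ≠ 0 := by simpa using hi
      refine Function.ne_iff.mpr ⟨i, ?_⟩
      show s i ^ p ≠ 0
      exact pow_ne_zero _ hi'
    · show ∑ i, s i ^ p * F i ^ p = 0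
      calc ∑ i, s i ^ p * F i ^ p = ∑ i, (s i * F i) ^ p := by
            refine Finset.sum_congr rfl fun i _ => ?_
            rw [mul_pow]
        _ = (∑ i, s i * F i) ^ p := (sum_pow_char p _ _).symm
        _ = 0 := by rw [hsum, zero_pow hp.ne_zero]
    · intro i
      show IsWeightedHomogeneous (fun _ => (1 : ℤ)) (s i ^ p) ((p : ℤ) * m - (p : ℤ) * d i)
      have e : (p : ℤ) * m - (p : ℤ) * d i = (p : ℤ) * (m - d i) := by ring
      rw [e]
      exact homog_pow (hsh i) p
  have hTne : T.Nonempty := ⟨_, hT1⟩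
  have hSne : S.Nonempty := ⟨_, hTS _ hT1⟩
  have hSbdd : BddBelow S := by
    refine ⟨0, fun m hm => ?_⟩
    obtain ⟨s, hs0, hsum, hsh⟩ := hm
    obtain ⟨i, hi⟩ := Function.ne_iff.mp hs0
    have hi' : s i ≠ 0 := by simpa using hi
    have h1 : (0 : ℤ) ≤ m - (p : ℤ) * d i := nonneg_of_homog (hsh i) hi'
    have h2 := hd0 i
    have h3 : (0 : ℤ) ≤ (p : ℤ) * d i := by positivity
    linarith
  obtain ⟨σ, hσ0, hσsum, hσh⟩ := Int.csInf_mem hSne hSbdd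
  set m' := sInf S with hm'def
  have hσh' : ∀ i, IsWeightedHomogeneous (fun _ => (1 : ℤ)) (σ i) (m' - (p : ℤ) * d i) :=
    fun i => hσh i
  have hσsum' : ∑ i, σ i * F i ^ p = 0 := hσsum
  have le1 : m' ≤ (p : ℤ) * sInf T := csInf_le hSbdd (hTS _ (Int.csInf_mem hTne hTbdd))
  -- all partial derivatives of a minimal syzygy vanish
  have hder : ∀ (j : Fin 2) (i : Fin 3), pderiv j (σ i) = 0 := by
    by_contra hcon
    push_neg at hcon
    obtain ⟨j, i0, hne⟩ := hcon
    have hFp : ∀ i, pderiv j (F i ^ p) = 0 := by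
      intro i
      rw [Derivation.leibniz_pow, nsmul_eq_mul]
      simp [CharP.cast_eq_zero (MvPolynomial (Fin 2) k) p]
    have hmem : m' - 1 ∈ S := by
      refine ⟨fun i => pderiv j (σ i), ?_, ?_, ?_⟩
      · refine Function.ne_iff.mpr ⟨i0, ?_⟩
        show pderiv j (σ i0) ≠ 0
        exact hne
      · show ∑ i, pderiv j (σ i) * F i ^ p = 0
        have hterm : ∀ i, pderiv j (σ i * F i ^ p) = pderiv j (σ i) * F i ^ p := by
          intro i
          rw [Derivation.leibniz, hFp i]
          simp [smul_eq_mul, mul_comm]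
        calc ∑ i, pderiv j (σ i) * F i ^ p
            = ∑ i, pderiv j (σ i * F i ^ p) :=
              Finset.sum_congr rfl fun i _ => (hterm i).symm
          _ = pderiv j (∑ i, σ i * F i ^ p) := (map_sum _ _ _).symm
          _ = 0 := by rw [hσsum']; exact map_zero _
      · intro i
        show IsWeightedHomogeneous (fun _ => (1 : ℤ)) (pderiv j (σ i))
          (m' - 1 - (p : ℤ) * d i)
        have e : m' - 1 - (p : ℤ) * d i = m' - (p : ℤ) * d i - 1 := by ring
        rw [e]
        exact homog_pderiv j (hσh' i)
    have := csInf_le hSbdd hmem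
    omega
  -- every exponent of σ is divisible by p
  have hdvd : ∀ i (e : Fin 2 →₀ ℕ), coeff e (σ i) ≠ 0 → ∀ j, p ∣ e j :=
    fun i e h j => dvd_of_pderiv_eq_zero p j (hder j i) h
  -- p divides m'
  obtain ⟨i0, hi0⟩ := Function.ne_iff.mp hσ0
  have hi0' : σ i0 ≠ 0 := by simpa using hi0
  obtain ⟨e, he⟩ := exists_coeff_ne_zero hi0'
  have hwe := hσh' i0 he
  rw [weight_one_apply] at hwe
  obtain ⟨c0, hc0⟩ := hdvd i0 e he 0
  obtain ⟨c1, hc1⟩ := hdvd i0 e he 1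
  have hpm : (p : ℤ) ∣ m' := by
    refine ⟨c0 + c1 + d i0, ?_⟩
    rw [hc0, hc1] at hwe
    push_cast at hwe
    linarith
  obtain ⟨m0, hm0⟩ := hpm
  -- the root of σ is a syzygy of F of degree m0
  have hm0T : m0 ∈ T := by
    refine ⟨fun i => root p hp.pos (σ i), ?_, ?_, ?_⟩
    · refine Function.ne_iff.mpr ⟨i0, ?_⟩
      show root p hp.pos (σ i0) ≠ 0
      intro h
      apply hi0'
      rw [← root_pow p hp (hdvd i0), h, zero_pow hp.ne_zero]
    · show ∑ i, root p hp.pos (σ i) * F i = 0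
      have hsum : (∑ i, root p hp.pos (σ i) * F i) ^ p = 0 := by
        calc (∑ i, root p hp.pos (σ i) * F i) ^ p
            = ∑ i, (root p hp.pos (σ i) * F i) ^ p := sum_pow_char p _ _
          _ = ∑ i, σ i * F i ^ p := by
              refine Finset.sum_congr rfl fun i _ => ?_
              rw [mul_pow, root_pow p hp (hdvd i)]
          _ = 0 := hσsum'
      exact pow_eq_zero_iff hp.ne_zero |>.mp hsum
    · intro i
      show IsWeightedHomogeneous (fun _ => (1 : ℤ)) (root p hp.pos (σ i)) (m0 - d i)
      apply root_homog p hp (hdvd i)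
      have e : (p : ℤ) * (m0 - d i) = m' - (p : ℤ) * d i := by rw [hm0]; ring
      rw [e]
      exact hσh' i
  have le2 : sInf T ≤ m0 := csInf_le hTbdd hm0T
  have hppos : (0 : ℤ) < (p : ℤ) := by exact_mod_cast hp.pos
  have le2' : (p : ℤ) * sInf T ≤ (p : ℤ) * m0 :=
    mul_le_mul_of_nonneg_left le2 (le_of_lt hppos)
  rw [← hm0] at le2'
  omega

lemma X0X1_ne : (X 0 + X 1 : MvPolynomial (Fin 2) k) ≠ 0 := by
  intro h
  have h2 := congrArg (coeff (Finsupp.single 0 1)) h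
  rw [coeff_add, coeff_zero, coeff_X', coeff_X'] at h2
  rw [if_pos rfl, if_neg (by
    intro hh
    have := Finsupp.single_left_injective (α := Fin 2) (one_ne_zero (α := ℕ)) hh
    exact absurd this (by decide))] at h2
  simp at h2

end SyzAux

open SyzAux in
/-- In `R = k[X,Y]` with the standard grading, over an algebraically closed field
of characteristic `p > 0`:
`sg(X^{p·a₁}, Y^{p·a₂}, (X+Y)^{p·a₃}) = p · sg(X^{a₁}, Y^{a₂}, (X+Y)^{a₃})`. -/
theorem stmt8 (k : Type*) [Field k] [IsAlgClosed k] (p : ℕ) (hp : p.Prime) [CharP k p]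
    (a₁ a₂ a₃ : ℕ) :
    sg (fun _ => (1 : ℤ)) ![((p * a₁ : ℕ) : ℤ), ((p * a₂ : ℕ) : ℤ), ((p * a₃ : ℕ) : ℤ)]
        ![(X 0 : MvPolynomial (Fin 2) k) ^ (p * a₁), X 1 ^ (p * a₂), (X 0 + X 1) ^ (p * a₃)] =
      (p : ℤ) * sg (fun _ => (1 : ℤ)) ![(a₁ : ℤ), (a₂ : ℤ), (a₃ : ℤ)]
        ![(X 0 : MvPolynomial (Fin 2) k) ^ a₁, X 1 ^ a₂, (X 0 + X 1) ^ a₃] := by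
  have hd : (![((p * a₁ : ℕ) : ℤ), ((p * a₂ : ℕ) : ℤ), ((p * a₃ : ℕ) : ℤ)] : Fin 3 → ℤ)
      = fun i => (p : ℤ) * (![(a₁ : ℤ), (a₂ : ℤ), (a₃ : ℤ)] : Fin 3 → ℤ) i := by
    funext i
    fin_cases i <;> simp <;> push_cast <;> ring
  have hFe : (![(X 0 : MvPolynomial (Fin 2) k) ^ (p * a₁), X 1 ^ (p * a₂),
        (X 0 + X 1) ^ (p * a₃)] : Fin 3 → MvPolynomial (Fin 2) k)
      = fun i => (![(X 0 : MvPolynomial (Fin 2) k) ^ a₁, X 1 ^ a₂,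
        (X 0 + X 1) ^ a₃] : Fin 3 → MvPolynomial (Fin 2) k) i ^ p := by
    funext i
    fin_cases i <;> simp [← pow_mul, mul_comm]
  have hF : ∀ i, (![(X 0 : MvPolynomial (Fin 2) k) ^ a₁, X 1 ^ a₂,
      (X 0 + X 1) ^ a₃] : Fin 3 → MvPolynomial (Fin 2) k) i ≠ 0 := by
    intro i
    fin_cases i
    · exact pow_ne_zero a₁ (show (X 0 : MvPolynomial (Fin 2) k) ≠ 0 from X_ne_zero 0)
    · exact pow_ne_zero a₂ (show (X 1 : MvPolynomial (Fin 2) k) ≠ 0 from X_ne_zero 1)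
    · exact pow_ne_zero a₃ X0X1_ne
  have hFh : ∀ i, IsWeightedHomogeneous (fun _ => (1 : ℤ))
      ((![(X 0 : MvPolynomial (Fin 2) k) ^ a₁, X 1 ^ a₂,
        (X 0 + X 1) ^ a₃] : Fin 3 → MvPolynomial (Fin 2) k) i)
      ((![(a₁ : ℤ), (a₂ : ℤ), (a₃ : ℤ)] : Fin 3 → ℤ) i) := by
    intro i
    fin_cases i
    · have h := homog_pow (isWeightedHomogeneous_X k (fun _ => (1 : ℤ)) 0) a₁
      simpa using h
    · have h := homog_pow (isWeightedHomogeneous_X k (fun _ => (1 : ℤ)) 1) a₂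
      simpa using h
    · have h := homog_pow ((isWeightedHomogeneous_X k (fun _ => (1 : ℤ)) 0).add
        (isWeightedHomogeneous_X k (fun _ => (1 : ℤ)) 1)) a₃
      simpa using h
  rw [sg, sg, hd, hFe, frob_sInf p hp _ _ hF hFh]
  simp only [Matrix.cons_val_zero, Matrix.cons_val_one, Matrix.head_cons,
    Matrix.cons_val_two, Matrix.tail_cons]
  ring

end
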